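/- arXiv:1712.08023 — 2 statements merged into one kernel-verified Lean document; each statement's English description precedes it below -/
import Mathlib

section
/- Let α be a finitely supported integer sequence supported in positions 1,…,l, and β a finitely supported sequence of nonnegative integers supported in positions 1,…,m. Then Σ_{i=1}^{l} (α_i − 1) ξ^{α − ε_i}_β = Σ_{j=1}^{m} β_j ξ^α_{β + ε_j}, where ξ^γ_δ denotes the value of the permutation character ξ^γ of S_{|γ|} (induced from the trivial character of the Young subgroup S_γ) at a permutation of cycle type δ, with the convention that ξ^γ_δ = 0 if γ has a negative entry or |γ| ≠ |δ|. -/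
open Finsupp
open scoped Classical

/-- The row index of `k` in the standard tabloid of shape `α`: the least `i` such that
`k < α 0 + ⋯ + α i`. -/
noncomputable def rowIdx (α : ℕ →₀ ℤ) (k : ℕ) : ℕ := sInf {i | (k : ℤ) < ∑ j ∈ Finset.range (i + 1), α j}

/-- The Young subgroup of `S_n` associated to `α`: the stabilizer of the standard tabloid
whose rows are the consecutive blocks of `{0, …, n-1}` of sizes `α 0, α 1, …`. -/
def youngSubgroup (n : ℕ) (α : ℕ →₀ ℤ) : Subgroup (Equiv.Perm (Fin n)) where
  carrier := {σ | ∀ k : Fin n, rowIdx α (σ k) = rowIdx α k}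
  one_mem' := fun _ => rfl
  mul_mem' := by
    intro a b ha hb k
    simpa [Equiv.Perm.mul_apply] using (ha (b k)).trans (hb k)
  inv_mem' := by
    intro a ha k
    have := ha (a⁻¹ k)
    rw [show a (a⁻¹ k) = k from by simp] at this
    exact this.symm

/-- The value at `g` of the permutation character of `G` acting on the cosets of `H`:
the number of fixed cosets.  This is the value of the character induced from the
trivial character of `H`. -/
noncomputable def permCharValue {n : ℕ} (H : Subgroup (Equiv.Perm (Fin n)))
    (g : Equiv.Perm (Fin n)) : ℤ :=
  Nat.card {x : Equiv.Perm (Fin n) ⧸ H // g • x = x}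

/-- `ξ^α`, as a function on `S_n`: the permutation character induced from the trivial
character of the Young subgroup `S_α` when `α` is nonnegative with `|α| = n`, and `0`
otherwise. -/
noncomputable def xi (n : ℕ) (α : ℕ →₀ ℤ) (g : Equiv.Perm (Fin n)) : ℤ :=
  if (∀ i, 0 ≤ α i) ∧ (α.sum fun _ v => v) = (n : ℤ) then permCharValue (youngSubgroup n α) g
  else 0

/-- An `α`-tabloid: a sequence of pairwise disjoint subsets of `{0,…,n-1}` with
`|t i| = α i` for every `i`. -/
def IsTabloid (n : ℕ) (α : ℕ →₀ ℤ) (t : ℕ → Finset (Fin n)) : Prop :=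
  (∀ i j, i ≠ j → Disjoint (t i) (t j)) ∧ ∀ i, ((t i).card : ℤ) = α i

/-- The multiset of (nonzero) parts of a finitely supported sequence. -/
def partsOf (β : ℕ →₀ ℕ) : Multiset ℕ := β.support.val.map β

/-- `σ` has cycle type `β` (with `1`s in `β` recording fixed points). -/
def HasCycleType {n : ℕ} (σ : Equiv.Perm (Fin n)) (β : ℕ →₀ ℕ) : Prop :=
  (β.sum fun _ v => v) = n ∧ σ.cycleType = Multiset.filter (fun k => 2 ≤ k) (partsOf β)

/-- A nonnegative sequence regarded as an integer sequence. -/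
noncomputable def natToZ (β : ℕ →₀ ℕ) : ℕ →₀ ℤ := Finsupp.mapRange Int.ofNat rfl β

/-- The virtual character `χ^α = ∑_{σ ∈ S_l} sgn σ · ξ^{α + σ - id_l}` (0-indexed,
the sequence `α + σ - id_l` has `i`-th entry `α i + σ i - i`). -/
noncomputable def chi (n l : ℕ) (α : ℕ →₀ ℤ) (g : Equiv.Perm (Fin n)) : ℤ :=
  ∑ σ : Equiv.Perm (Fin l),
    (Equiv.Perm.sign σ : ℤ) *
      xi n (α + ∑ i : Fin l, Finsupp.single (i : ℕ) (((σ i : ℕ) : ℤ) - (i : ℕ))) g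

/-- `ζ^α`, the irreducible character of `S_n` corresponding to the partition `α` of `n`,
given by the determinantal formula `ζ^α = χ^α` (with `l = n ≥ l(α)`). -/
noncomputable def zeta (n : ℕ) (α : ℕ →₀ ℕ) (g : Equiv.Perm (Fin n)) : ℤ :=
  chi n n (natToZ α) g

/-- `α` is a partition of `n`: weakly decreasing with `|α| = n`. -/
def IsPartitionOf (α : ℕ →₀ ℕ) (n : ℕ) : Prop :=
  (∀ i, α (i + 1) ≤ α i) ∧ (α.sum fun _ v => v) = n


section Counting


variable {S T : Type*} [Fintype S] [Fintype T]

/-- weighted fiber sum -/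
noncomputable def wSum (w : S → ℕ) (f : S → ℕ) (i : ℕ) : ℤ :=
  ∑ x : S, if f x = i then (w x : ℤ) else 0

def WCond (w : S → ℕ) (γ : ℕ →₀ ℤ) (f : S → ℕ) : Prop := ∀ i, wSum w f i = γ i

noncomputable def wcnt (S : Type*) [Fintype S] (w : S → ℕ) (γ : ℕ →₀ ℤ) : ℕ :=
  Nat.card {f : S → ℕ // WCond w γ f}

lemma wSum_nonneg (w : S → ℕ) (f : S → ℕ) (i : ℕ) : 0 ≤ wSum w f i :=
  Finset.sum_nonneg fun x _ => by positivity

lemma wSum_eq_filter (w : S → ℕ) (f : S → ℕ) (i : ℕ) :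
    wSum w f i = ∑ x ∈ Finset.univ.filter (fun x => f x = i), (w x : ℤ) :=
  (Finset.sum_filter _ _).symm

lemma le_wSum (w : S → ℕ) (f : S → ℕ) (x : S) : (w x : ℤ) ≤ wSum w f (f x) := by
  rw [wSum_eq_filter]
  exact Finset.single_le_sum (f := fun x => (w x : ℤ)) (fun y _ => by positivity)
    (by simp)

lemma mem_support_of_wcond {w : S → ℕ} (hw : ∀ x, 1 ≤ w x) {γ : ℕ →₀ ℤ} {f : S → ℕ}
    (hf : WCond w γ f) (x : S) : f x ∈ γ.support := by
  rw [Finsupp.mem_support_iff]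
  have h1 : (1 : ℤ) ≤ γ (f x) := by
    rw [← hf (f x)]
    exact le_trans (by exact_mod_cast hw x) (le_wSum w f x)
  omega

lemma wcond_finite (w : S → ℕ) (hw : ∀ x, 1 ≤ w x) (γ : ℕ →₀ ℤ) :
    Finite {f : S → ℕ // WCond w γ f} := by
  let F : {f : S → ℕ // WCond w γ f} → (S → γ.support) :=
    fun f x => ⟨f.1 x, mem_support_of_wcond hw f.2 x⟩
  have hF : Function.Injective F := by
    intro f g h
    ext x
    exact congrArg Subtype.val (congrFun h x)
  exact Finite.of_injective F hF

/-- transport of wcnt along a weight-preserving equivalence -/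
lemma wcnt_eq_of_equiv (w₁ : S → ℕ) (w₂ : T → ℕ) (e : S ≃ T) (he : ∀ x, w₂ (e x) = w₁ x)
    (γ : ℕ →₀ ℤ) : wcnt S w₁ γ = wcnt T w₂ γ := by
  apply Nat.card_congr
  refine Equiv.subtypeEquiv (Equiv.arrowCongr e (Equiv.refl ℕ)) (fun f => ?_)
  unfold WCond
  have key : ∀ i, wSum w₂ (fun t => f (e.symm t)) i = wSum w₁ f i := by
    intro i
    unfold wSum
    rw [← Equiv.sum_comp e (fun x => if f (e.symm x) = i then (w₂ x : ℤ) else 0)]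
    apply Finset.sum_congr rfl
    intro x _
    simp [he x]
  have harr : ∀ t, (Equiv.arrowCongr e (Equiv.refl ℕ)) f t = f (e.symm t) := by
    intro t; simp [Equiv.arrowCongr]
  have hws : ∀ i, wSum w₂ ((Equiv.arrowCongr e (Equiv.refl ℕ)) f) i = wSum w₁ f i := by
    intro i
    rw [← key i]
    unfold wSum
    exact Finset.sum_congr rfl fun x _ => by rw [harr x]
  exact forall_congr' fun i => by rw [hws i]

/-- equivalence from equal fiber cardinalities -/
noncomputable def equivOfFiberCard {X Y I : Type*} [Fintype X] [Fintype Y] (f : X → I) (g : Y → I)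
    (h : ∀ i, Nat.card {x // f x = i} = Nat.card {y // g y = i}) : X ≃ Y :=
  Equiv.ofFiberEquiv (f := f) (g := g) (fun i => Fintype.equivOfCardEq
    (α := {x // f x = i}) (β := {y // g y = i})
    (by rw [← Nat.card_eq_fintype_card, ← Nat.card_eq_fintype_card]; exact h i))

lemma equivOfFiberCard_map {X Y I : Type*} [Fintype X] [Fintype Y] (f : X → I) (g : Y → I)
    (h : ∀ i, Nat.card {x // f x = i} = Nat.card {y // g y = i}) (x : X) :
    g (equivOfFiberCard f g h x) = f x := Equiv.ofFiberEquiv_map (f := f) (g := g) _ x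

/-- wcnt depends only on the multiset of weights -/
lemma wcnt_eq_of_multiset (w₁ : S → ℕ) (w₂ : T → ℕ)
    (h : Finset.univ.val.map w₁ = Finset.univ.val.map w₂) (γ : ℕ →₀ ℤ) :
    wcnt S w₁ γ = wcnt T w₂ γ := by
  have hfib : ∀ v : ℕ, Nat.card {x // w₁ x = v} = Nat.card {y // w₂ y = v} := by
    intro v
    have hc := congrArg (Multiset.count v) h
    rw [Multiset.count_map, Multiset.count_map] at hc
    rw [Nat.card_eq_fintype_card, Nat.card_eq_fintype_card,
      Fintype.card_subtype, Fintype.card_subtype]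
    simpa [Finset.filter, Multiset.countP_eq_card_filter, eq_comm] using hc
  exact wcnt_eq_of_equiv w₁ w₂ (equivOfFiberCard w₁ w₂ hfib)
    (fun x => equivOfFiberCard_map w₁ w₂ hfib x) γ

end Counting

section RowIdx

variable (γ : ℕ →₀ ℤ)

/-- partial sums -/
noncomputable def PS (i : ℕ) : ℤ := ∑ j ∈ Finset.range i, γ j

lemma PS_mono (hpos : ∀ i, 0 ≤ γ i) : Monotone (PS γ) := by
  intro a b hab
  unfold PS
  exact Finset.sum_le_sum_of_subset_of_nonneg (Finset.range_subset_range.mpr hab)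
    (fun j _ _ => hpos j)

lemma PS_nonneg (hpos : ∀ i, 0 ≤ γ i) (i : ℕ) : 0 ≤ PS γ i :=
  Finset.sum_nonneg fun j _ => hpos j

lemma PS_total (i : ℕ) (hi : γ.support ⊆ Finset.range i) :
    PS γ i = γ.sum (fun _ v => v) := by
  rw [Finsupp.sum]
  exact (Finset.sum_subset hi (fun j _ hj => Finsupp.notMem_support_iff.mp hj)).symm

lemma support_subset_range : γ.support ⊆ Finset.range (γ.support.sup id + 1) := by
  intro j hj
  exact Finset.mem_range.mpr (Nat.lt_succ_of_le (Finset.le_sup (f := id) hj))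

lemma PS_le_total (hpos : ∀ i, 0 ≤ γ i) (i : ℕ) : PS γ i ≤ γ.sum (fun _ v => v) := by
  set i₀ := γ.support.sup id + 1
  calc PS γ i ≤ PS γ (max i i₀) := PS_mono γ hpos (le_max_left _ _)
    _ = γ.sum (fun _ v => v) := PS_total γ _ ((support_subset_range γ).trans
        (Finset.range_subset_range.mpr (le_max_right _ _)))

lemma rowIdx_eq_iff (hpos : ∀ i, 0 ≤ γ i) (k : ℕ)
    (hk : (k : ℤ) < γ.sum (fun _ v => v)) (i : ℕ) :
    rowIdx γ k = i ↔ PS γ i ≤ (k : ℤ) ∧ (k : ℤ) < PS γ (i + 1) := by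
  have hne : {i | (k : ℤ) < ∑ j ∈ Finset.range (i + 1), γ j}.Nonempty := by
    refine ⟨γ.support.sup id + 1, ?_⟩
    show (k : ℤ) < PS γ _
    rw [PS_total γ _ ((support_subset_range γ).trans (Finset.range_subset_range.mpr (by omega)))]
    exact hk
  constructor
  · rintro rfl
    constructor
    · rcases Nat.eq_zero_or_pos (rowIdx γ k) with h0 | h0
      · rw [h0]; exact PS_nonneg γ hpos 0 |>.trans_eq rfl |>.trans (by positivity)
      · have hnm := Nat.notMem_of_lt_sInf (m := rowIdx γ k - 1)
          (s := {i | (k : ℤ) < ∑ j ∈ Finset.range (i + 1), γ j})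
          (by show rowIdx γ k - 1 < rowIdx γ k; omega)
        simp only [Set.mem_setOf_eq, not_lt] at hnm
        show PS γ (rowIdx γ k) ≤ (k : ℤ)
        have heq : PS γ (rowIdx γ k) = PS γ (rowIdx γ k - 1 + 1) := by congr 1; omega
        rw [heq]
        exact hnm
    · exact Nat.sInf_mem hne
  · rintro ⟨h1, h2⟩
    have hmem : rowIdx γ k ≤ i := Nat.sInf_le h2
    rcases lt_or_eq_of_le hmem with hlt | heq
    · exfalso
      have : (k : ℤ) < PS γ (rowIdx γ k + 1) := Nat.sInf_mem hne
      have hle : PS γ (rowIdx γ k + 1) ≤ PS γ i := PS_mono γ hpos (by omega)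
      omega
    · exact heq

lemma rowIdx_fiber_card (n : ℕ) (hpos : ∀ i, 0 ≤ γ i)
    (hsum : γ.sum (fun _ v => v) = (n : ℤ)) (i : ℕ) :
    ((Finset.univ.filter (fun k : Fin n => rowIdx γ (k : ℕ) = i)).card : ℤ) = γ i := by
  set a := (PS γ i).toNat with ha
  set b := (PS γ (i + 1)).toNat with hb
  have hai : (a : ℤ) = PS γ i := Int.toNat_of_nonneg (PS_nonneg γ hpos i)
  have hbi : (b : ℤ) = PS γ (i + 1) := Int.toNat_of_nonneg (PS_nonneg γ hpos (i + 1))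
  have hab : a ≤ b := by
    have := PS_mono γ hpos (show i ≤ i + 1 by omega); omega
  have hbn : b ≤ n := by
    have h := PS_le_total γ hpos (i + 1)
    rw [hsum] at h
    omega
  have hfib : Finset.univ.filter (fun k : Fin n => rowIdx γ (k : ℕ) = i)
      = Finset.attachFin (Finset.Ico a b) (fun m hm => by
          rw [Finset.mem_Ico] at hm; omega) := by
    ext k
    rw [Finset.mem_filter, Finset.mem_attachFin, Finset.mem_Ico]
    have hk : ((k : ℕ) : ℤ) < γ.sum (fun _ v => v) := by
      rw [hsum]; exact_mod_cast k.isLt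
    rw [rowIdx_eq_iff γ hpos _ hk i]
    constructor
    · rintro ⟨-, h1, h2⟩; omega
    · rintro ⟨h1, h2⟩
      exact ⟨Finset.mem_univ _, by omega, by omega⟩
  rw [hfib, Finset.card_attachFin, Nat.card_Ico]
  have : PS γ (i + 1) - PS γ i = γ i := by
    unfold PS; rw [Finset.sum_range_succ]; ring
  omega

end RowIdx

section StepA

/-- row function condition -/
def IsRowFn (n : ℕ) (γ : ℕ →₀ ℤ) (r : Fin n → ℕ) : Prop :=
  ∀ i, ((Finset.univ.filter fun k => r k = i).card : ℤ) = γ i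

lemma nat_card_subtype {X : Type*} [Fintype X] (p : X → Prop) [DecidablePred p] :
    Nat.card {x // p x} = (Finset.univ.filter p).card := by
  simp [Nat.card_eq_fintype_card, Fintype.card_subtype]

variable {n : ℕ} (γ : ℕ →₀ ℤ) (g : Equiv.Perm (Fin n))

lemma mem_young_iff (σ : Equiv.Perm (Fin n)) :
    σ ∈ youngSubgroup n γ ↔ ∀ k : Fin n, rowIdx γ (σ k) = rowIdx γ k := Iff.rfl

/-- the row function of the coset of σ -/
noncomputable def barF (σ : Equiv.Perm (Fin n)) : Fin n → ℕ := fun k => rowIdx γ ((σ⁻¹ k : Fin n) : ℕ)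

lemma barF_rowfn (hpos : ∀ i, 0 ≤ γ i) (hsum : γ.sum (fun _ v => v) = (n : ℤ))
    (σ : Equiv.Perm (Fin n)) : IsRowFn n γ (barF γ σ) := by
  intro i
  unfold barF
  rw [← rowIdx_fiber_card γ n hpos hsum i]
  congr 1
  apply Finset.card_nbij' (i := fun k => σ⁻¹ k) (j := fun k => σ k) <;>
    simp [Set.MapsTo, Set.LeftInvOn, Set.RightInvOn]

lemma barF_eq_iff (σ σ' : Equiv.Perm (Fin n)) :
    barF γ σ = barF γ σ' ↔ (σ : Equiv.Perm (Fin n) ⧸ youngSubgroup n γ) = σ' := by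
  rw [QuotientGroup.eq]
  constructor
  · intro h
    intro k
    have hk := congrFun h (σ' k)
    simp only [barF] at hk ⊢
    simp only [Equiv.Perm.mul_apply, Equiv.Perm.coe_inv, Equiv.symm_apply_apply] at hk ⊢
    exact hk
  · intro h
    funext k
    have hk := h ((σ')⁻¹ k)
    simp only [barF, Equiv.Perm.mul_apply] at hk ⊢
    simpa using hk

lemma barF_fixed_iff (σ : Equiv.Perm (Fin n)) :
    (g • (σ : Equiv.Perm (Fin n) ⧸ youngSubgroup n γ) = σ)
      ↔ ∀ k, barF γ σ (g k) = barF γ σ k := by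
  have hsmul : g • (σ : Equiv.Perm (Fin n) ⧸ youngSubgroup n γ) = ((g * σ : Equiv.Perm (Fin n)) : Equiv.Perm (Fin n) ⧸ youngSubgroup n γ) := rfl
  rw [hsmul, QuotientGroup.eq]
  constructor
  · intro h k
    have hk := h ((σ⁻¹) (g k))
    simp only [barF, Equiv.Perm.mul_apply, mul_inv_rev] at hk ⊢
    simp only [Equiv.Perm.coe_inv, Equiv.apply_symm_apply, Equiv.symm_apply_apply] at hk
    exact hk.symm
  · intro h k
    have hk := h (g⁻¹ (σ k))
    simp only [barF, Equiv.Perm.mul_apply, mul_inv_rev] at hk ⊢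
    simp only [Equiv.Perm.coe_inv, Equiv.apply_symm_apply, Equiv.symm_apply_apply] at hk ⊢
    exact hk.symm

lemma xi_eq_R : xi n γ g
    = Nat.card {r : Fin n → ℕ // IsRowFn n γ r ∧ ∀ k, r (g k) = r k} := by
  unfold xi
  split_ifs with hcond
  · obtain ⟨hpos, hsum⟩ := hcond
    unfold permCharValue
    -- build the map
    set Q := Equiv.Perm (Fin n) ⧸ youngSubgroup n γ with hQ
    have hbarQ : ∀ x : Q, ∃ σ : Equiv.Perm (Fin n), x = σ := fun x =>
      QuotientGroup.induction_on x (fun σ => ⟨σ, rfl⟩)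
    set Φ : {x : Q // g • x = x} → {r : Fin n → ℕ // IsRowFn n γ r ∧ ∀ k, r (g k) = r k} :=
      fun x => by
        choose σ hσ using hbarQ x.1
        exact ⟨barF γ σ, barF_rowfn γ hpos hsum σ,
          (barF_fixed_iff γ g σ).mp (by rw [← hσ]; exact x.2)⟩
      with hΦ
    have hΦval : ∀ (x : {x : Q // g • x = x}) (σ : Equiv.Perm (Fin n)), x.1 = σ →
        (Φ x).1 = barF γ σ := by
      intro x σ hσ
      simp only [hΦ]
      set σ' := Classical.choose (hbarQ x.1) with hσ'
      have h1 : x.1 = (σ' : Q) := Classical.choose_spec (hbarQ x.1)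
      apply (barF_eq_iff γ σ' σ).mpr
      rw [← h1, hσ]
    suffices h : Function.Bijective Φ by
      exact_mod_cast Nat.card_eq_of_bijective Φ h
    constructor
    · rintro ⟨x, hx⟩ ⟨y, hy⟩ hxy
      obtain ⟨σ, hσ⟩ := hbarQ x
      obtain ⟨σ', hσ'⟩ := hbarQ y
      have h1 := hΦval ⟨x, hx⟩ σ hσ
      have h2 := hΦval ⟨y, hy⟩ σ' hσ'
      have : barF γ σ = barF γ σ' := by rw [← h1, ← h2, hxy]
      have := (barF_eq_iff γ σ σ').mp this
      apply Subtype.ext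
      show x = y
      rw [hσ, hσ', this]
    · rintro ⟨r, hr, hrg⟩
      -- fiber cardinalities of r match those of rowIdx
      have hrow : IsRowFn n γ (fun k : Fin n => rowIdx γ (k : ℕ)) := fun i =>
        rowIdx_fiber_card γ n hpos hsum i
      have hfib : ∀ i, Nat.card {k : Fin n // r k = i}
          = Nat.card {k : Fin n // rowIdx γ (k : ℕ) = i} := by
        intro i
        rw [nat_card_subtype, nat_card_subtype]
        have := (hr i).trans (hrow i).symm
        exact_mod_cast this
      set e := equivOfFiberCard r (fun k : Fin n => rowIdx γ (k : ℕ)) hfib with he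
      have hemap : ∀ k, rowIdx γ ((e k : Fin n) : ℕ) = r k :=
        fun k => equivOfFiberCard_map r (fun k : Fin n => rowIdx γ (k : ℕ)) hfib k
      set σ : Equiv.Perm (Fin n) := (e : Equiv.Perm (Fin n))⁻¹ with hσdef
      have hbs : barF γ σ = r := by
        funext k
        show rowIdx γ ((σ⁻¹ k : Fin n) : ℕ) = r k
        rw [hσdef, inv_inv]
        exact hemap k
      have hfix : g • (σ : Q) = (σ : Q) := by
        apply (barF_fixed_iff γ g σ).mpr
        rw [hbs]
        exact hrg
      refine ⟨⟨(σ : Q), hfix⟩, ?_⟩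
      ext1
      rw [hΦval ⟨(σ : Q), hfix⟩ σ rfl, hbs]
  · -- degenerate case: the set of row functions is empty
    suffices h : Nat.card {r : Fin n → ℕ // IsRowFn n γ r ∧ ∀ k, r (g k) = r k} = 0 by
      rw [h]; simp
    rw [Nat.card_eq_zero]
    left
    constructor
    rintro ⟨r, hr, -⟩
    apply hcond
    have hpos : ∀ i, 0 ≤ γ i := fun i => (hr i) ▸ Int.natCast_nonneg _
    refine ⟨hpos, ?_⟩
    have hmem : ∀ k : Fin n, r k ∈ γ.support := by
      intro k
      rw [Finsupp.mem_support_iff, ← hr (r k)]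
      have : k ∈ Finset.univ.filter (fun k' : Fin n => r k' = r k) := by simp
      have hcard := Finset.card_pos.mpr ⟨k, this⟩
      intro hzero
      omega
    have hcount := Finset.card_eq_sum_card_fiberwise (f := r) (s := Finset.univ)
      (t := γ.support) (fun k _ => hmem k)
    rw [Finsupp.sum]
    have : (n : ℤ) = ∑ i ∈ γ.support, ((Finset.univ.filter fun k : Fin n => r k = i).card : ℤ) := by
      rw [← Nat.cast_sum, ← hcount]
      simp
    rw [this]
    exact Finset.sum_congr rfl fun i _ => (hr i).symm

end StepA

section StepB

variable {n : ℕ} (g : Equiv.Perm (Fin n))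

/-- blocks: cycles and fixed points -/
abbrev BlockT : Type := ↥g.cycleFactorsFinset ⊕ ↥(Finset.univ.filter (fun x : Fin n => g x = x))

noncomputable instance : Fintype (BlockT g) := by unfold BlockT; infer_instance

/-- block weights -/
noncomputable def bw : BlockT g → ℕ :=
  Sum.elim (fun c => (c.1 : Equiv.Perm (Fin n)).support.card) (fun _ => 1)

/-- the block of a point -/
noncomputable def blk : Fin n → BlockT g := fun k =>
  if h : g k = k then Sum.inr ⟨k, by simp [h]⟩
  else Sum.inl ⟨g.cycleOf k,
    Equiv.Perm.cycleOf_mem_cycleFactorsFinset_iff.mpr (Equiv.Perm.mem_support.mpr h)⟩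

lemma blk_apply_g (k : Fin n) : blk g (g k) = blk g k := by
  by_cases h : g k = k
  · rw [h]
  · have h2 : g (g k) ≠ g k := fun hh => h (g.injective hh)
    unfold blk
    rw [dif_neg h, dif_neg h2]
    exact congrArg Sum.inl (Subtype.ext (Equiv.Perm.cycleOf_self_apply g k))

lemma blk_eq_inr_iff (k p : Fin n) (hp : p ∈ Finset.univ.filter (fun x : Fin n => g x = x)) :
    blk g k = Sum.inr ⟨p, hp⟩ ↔ k = p := by
  have hgp : g p = p := by simpa using hp
  unfold blk
  by_cases h : g k = k
  · rw [dif_pos h]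
    constructor
    · intro hh
      exact congrArg Subtype.val (Sum.inr.inj hh)
    · rintro rfl
      rfl
  · rw [dif_neg h]
    constructor
    · intro hh
      exact (Sum.inl_ne_inr hh).elim
    · rintro rfl
      exact absurd hgp h

lemma blk_eq_inl_iff (k : Fin n) (c : Equiv.Perm (Fin n)) (hc : c ∈ g.cycleFactorsFinset) :
    blk g k = Sum.inl ⟨c, hc⟩ ↔ k ∈ c.support := by
  unfold blk
  by_cases h : g k = k
  · rw [dif_pos h]
    constructor
    · intro hh
      exact (Sum.inr_ne_inl hh).elim
    · intro hk
      exfalso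
      obtain ⟨-, h2⟩ := (Equiv.Perm.mem_cycleFactorsFinset_iff).mp hc
      have hck := h2 k hk
      rw [Equiv.Perm.mem_support] at hk
      rw [h] at hck
      exact hk hck
  · rw [dif_neg h]
    constructor
    · intro hh
      have hcc : g.cycleOf k = c := congrArg Subtype.val (Sum.inl.inj hh)
      rw [← hcc, Equiv.Perm.mem_support_cycleOf_iff]
      exact ⟨Equiv.Perm.SameCycle.refl g k, Equiv.Perm.mem_support.mpr h⟩
    · intro hk
      exact congrArg Sum.inl (Subtype.ext (Equiv.Perm.cycle_is_cycleOf hk hc).symm)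

lemma blk_surjective : Function.Surjective (blk g) := by
  rintro (⟨c, hc⟩ | ⟨p, hp⟩)
  · have hcyc : c.IsCycle := (Equiv.Perm.mem_cycleFactorsFinset_iff.mp hc).1
    have hne : c.support.Nonempty := by
      rw [Finset.nonempty_iff_ne_empty, Ne, Equiv.Perm.support_eq_empty_iff]
      exact hcyc.ne_one
    obtain ⟨k, hk⟩ := hne
    exact ⟨k, (blk_eq_inl_iff g k c hc).mpr hk⟩
  · exact ⟨p, (blk_eq_inr_iff g p p hp).mpr rfl⟩

lemma blk_fiber_card (x : BlockT g) :
    (Finset.univ.filter (fun k => blk g k = x)).card = bw g x := by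
  rcases x with ⟨c, hc⟩ | ⟨p, hp⟩
  · have : Finset.univ.filter (fun k => blk g k = Sum.inl ⟨c, hc⟩) = c.support := by
      ext k
      simp [blk_eq_inl_iff g k c hc]
    rw [this]
    rfl
  · have : Finset.univ.filter (fun k => blk g k = Sum.inr ⟨p, hp⟩) = {p} := by
      ext k
      simp [blk_eq_inr_iff g k p hp]
    rw [this]
    rfl

lemma r_pow_apply (r : Fin n → ℕ) (hr : ∀ k, r (g k) = r k) :
    ∀ (m : ℕ) (k : Fin n), r ((g ^ m) k) = r k := by
  intro m
  induction m with
  | zero => intro k; simp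
  | succ m ih =>
    intro k
    rw [pow_succ, Equiv.Perm.mul_apply]
    exact (ih (g k)).trans (hr k)

lemma r_zpow_apply (r : Fin n → ℕ) (hr : ∀ k, r (g k) = r k) :
    ∀ (m : ℤ) (k : Fin n), r ((g ^ m) k) = r k := by
  have hr' : ∀ k, r (g⁻¹ k) = r k := by
    intro k
    have h2 := hr (g⁻¹ k)
    rw [Equiv.Perm.coe_inv, Equiv.apply_symm_apply] at h2
    exact h2.symm
  intro m k
  cases m with
  | ofNat m => rw [Int.ofNat_eq_coe, zpow_natCast]; exact r_pow_apply g r hr m k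
  | negSucc m =>
    rw [zpow_negSucc, ← inv_pow]
    exact r_pow_apply g⁻¹ r hr' (m + 1) k

lemma r_const_on_blk (r : Fin n → ℕ) (hr : ∀ k, r (g k) = r k) (k₁ k₂ : Fin n)
    (hb : blk g k₁ = blk g k₂) : r k₁ = r k₂ := by
  rcases hx : blk g k₁ with ⟨c, hc⟩ | ⟨p, hp⟩
  · have h1 : k₁ ∈ c.support := (blk_eq_inl_iff g k₁ c hc).mp hx
    have h2 : k₂ ∈ c.support := (blk_eq_inl_iff g k₂ c hc).mp (hb ▸ hx)
    have hcyc : c = g.cycleOf k₁ := Equiv.Perm.cycle_is_cycleOf h1 hc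
    rw [hcyc] at h2
    have hsc : g.SameCycle k₁ k₂ := (Equiv.Perm.mem_support_cycleOf_iff.mp h2).1
    obtain ⟨m, hm⟩ := hsc
    rw [← hm]
    exact (r_zpow_apply g r hr m k₁).symm
  · have h1 : k₁ = p := (blk_eq_inr_iff g k₁ p hp).mp hx
    have h2 : k₂ = p := (blk_eq_inr_iff g k₂ p hp).mp (hb ▸ hx)
    rw [h1, h2]

lemma rowfn_iff_wcond (γ : ℕ →₀ ℤ) (F : BlockT g → ℕ) :
    IsRowFn n γ (fun k => F (blk g k)) ↔ WCond (bw g) γ F := by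
  have key : ∀ i, ((Finset.univ.filter (fun k : Fin n => F (blk g k) = i)).card : ℤ)
      = wSum (bw g) F i := by
    intro i
    rw [wSum_eq_filter]
    have hmaps : ∀ k ∈ Finset.univ.filter (fun k : Fin n => F (blk g k) = i),
        blk g k ∈ Finset.univ.filter (fun x => F x = i) := by
      intro k hk
      simp only [Finset.mem_filter, Finset.mem_univ, true_and] at hk ⊢
      exact hk
    rw [Finset.card_eq_sum_card_fiberwise hmaps]
    rw [Nat.cast_sum]
    apply Finset.sum_congr rfl
    intro x hx
    simp only [Finset.mem_filter, Finset.mem_univ, true_and] at hx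
    have : (Finset.univ.filter (fun k : Fin n => F (blk g k) = i)).filter
        (fun k => blk g k = x) = Finset.univ.filter (fun k => blk g k = x) := by
      ext k
      simp only [Finset.mem_filter, Finset.mem_univ, true_and]
      constructor
      · rintro ⟨-, h⟩; exact h
      · intro h; exact ⟨by rw [h]; exact hx, h⟩
    rw [this, blk_fiber_card g x]
  constructor
  · intro h i; rw [← key i]; exact h i
  · intro h i; rw [key i]; exact h i

lemma R_eq_wcnt (γ : ℕ →₀ ℤ) :
    Nat.card {r : Fin n → ℕ // IsRowFn n γ r ∧ ∀ k, r (g k) = r k}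
      = wcnt (BlockT g) (bw g) γ := by
  symm
  apply Nat.card_eq_of_bijective
    (f := fun F : {F : BlockT g → ℕ // WCond (bw g) γ F} =>
      (⟨fun k => F.1 (blk g k), (rowfn_iff_wcond g γ F.1).mpr F.2,
        fun k => by show F.1 (blk g (g k)) = F.1 (blk g k); rw [blk_apply_g]⟩ :
        {r : Fin n → ℕ // IsRowFn n γ r ∧ ∀ k, r (g k) = r k}))
  constructor
  · rintro ⟨F, hF⟩ ⟨F', hF'⟩ h
    have h2 : ∀ k, F (blk g k) = F' (blk g k) :=
      fun k => congrFun (congrArg Subtype.val h) k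
    apply Subtype.ext
    funext x
    obtain ⟨k, rfl⟩ := blk_surjective g x
    exact h2 k
  · rintro ⟨r, hr, hrg⟩
    set s := Function.surjInv (blk_surjective g) with hs
    have hsec : ∀ x, blk g (s x) = x := fun x => Function.surjInv_eq (blk_surjective g) x
    set F : BlockT g → ℕ := fun x => r (s x) with hF
    have hFblk : ∀ k, F (blk g k) = r k := by
      intro k
      apply r_const_on_blk g r hrg
      rw [hsec]
    have hcond : WCond (bw g) γ F := by
      rw [← rowfn_iff_wcond g γ F]
      intro i
      rw [← hr i]
      have hfe : Finset.filter (fun k => (fun k => F (blk g k)) k = i) Finset.univ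
          = Finset.filter (fun k => r k = i) Finset.univ := by
        apply Finset.filter_congr
        intro k _
        simp only [hFblk]
      rw [hfe]
    refine ⟨⟨F, hcond⟩, ?_⟩
    apply Subtype.ext
    funext k
    exact hFblk k

lemma finset_attach_weights {α β : Type*} (s : Finset α) (f : α → β) :
    (Finset.univ.val.map (fun x : ↥s => f x.1) : Multiset β) = s.val.map f := by
  rw [Finset.univ_eq_attach]
  show Multiset.map (fun x : ↥s => f x.1) s.val.attach = _
  exact Multiset.attach_map_val' s.val f

lemma blockT_weights (β : ℕ →₀ ℕ) (hct : HasCycleType g β) :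
    (Finset.univ.val.map (bw g) : Multiset ℕ) = partsOf β := by
  -- LHS = cycleType + replicate (#fixed) 1
  have hparts_pos : ∀ x ∈ partsOf β, 1 ≤ x := by
    intro x hx
    obtain ⟨j, hj, rfl⟩ := Multiset.mem_map.mp hx
    have : j ∈ β.support := hj
    rw [Finsupp.mem_support_iff] at this
    omega
  obtain ⟨hsum, htype⟩ := hct
  have hsplit : partsOf β = Multiset.filter (fun k => 2 ≤ k) (partsOf β)
      + Multiset.filter (fun k => ¬ 2 ≤ k) (partsOf β) :=
    (Multiset.filter_add_not _ _).symm
  have hones : Multiset.filter (fun k => ¬ 2 ≤ k) (partsOf β)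
      = Multiset.replicate (Multiset.card (Multiset.filter (fun k => ¬ 2 ≤ k) (partsOf β))) 1 := by
    rw [Multiset.eq_replicate_card]
    intro b hb
    rw [Multiset.mem_filter] at hb
    have := hparts_pos b hb.1
    omega
  -- sums
  have hsum1 : (partsOf β).sum = n := by
    have : (partsOf β).sum = β.sum (fun _ v => v) := by
      rw [Finsupp.sum]
      rfl
    rw [this, hsum]
  have hfixed : (Finset.univ.filter (fun x : Fin n => g x = x)).card + g.support.card = n := by
    have hsupp : g.support = Finset.univ.filter (fun x : Fin n => ¬ g x = x) := by
      ext x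
      simp [Equiv.Perm.mem_support]
    rw [hsupp]
    rw [Finset.card_filter_add_card_filter_not]
    simp
  have hcyclesum : (Multiset.filter (fun k => 2 ≤ k) (partsOf β)).sum = g.support.card := by
    rw [← htype]
    exact Equiv.Perm.sum_cycleType g
  have hcount : Multiset.card (Multiset.filter (fun k => ¬ 2 ≤ k) (partsOf β))
      = (Finset.univ.filter (fun x : Fin n => g x = x)).card := by
    have h1 : (partsOf β).sum = (Multiset.filter (fun k => 2 ≤ k) (partsOf β)).sum
        + (Multiset.filter (fun k => ¬ 2 ≤ k) (partsOf β)).sum := by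
      conv_lhs => rw [hsplit]
      rw [Multiset.sum_add]
    rw [hones, Multiset.sum_replicate, smul_eq_mul, mul_one] at h1
    omega
  -- compute LHS
  have hlhs : (Finset.univ.val.map (bw g) : Multiset ℕ)
      = g.cycleType + Multiset.replicate
          (Finset.univ.filter (fun x : Fin n => g x = x)).card 1 := by
    have huniv : (Finset.univ : Finset (BlockT g)).val
        = ((Finset.univ : Finset ↥g.cycleFactorsFinset).disjSum
            (Finset.univ : Finset ↥(Finset.univ.filter (fun x : Fin n => g x = x)))).val := by
      rw [Finset.univ_disjSum_univ]
    rw [huniv, Finset.val_disjSum]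
    unfold Multiset.disjSum
    rw [Multiset.map_add, Multiset.map_map, Multiset.map_map]
    congr 1
    · show (Finset.univ.val.map
          (fun c : ↥g.cycleFactorsFinset => (c.1 : Equiv.Perm (Fin n)).support.card)) = _
      rw [finset_attach_weights g.cycleFactorsFinset (fun c => c.support.card)]
      rfl
    · show (Finset.univ.val.map
          (fun _ : ↥(Finset.univ.filter (fun x : Fin n => g x = x)) => 1)) = _
      rw [finset_attach_weights (Finset.univ.filter (fun x : Fin n => g x = x))
        (fun _ => (1 : ℕ))]
      rw [Multiset.map_const']
      rfl
  rw [hlhs, htype, ← hcount]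
  conv_rhs => rw [hsplit]
  rw [hones, Multiset.card_replicate]

end StepB

section StepC

/-- the weight function on the support of β -/
noncomputable def swt (β : ℕ →₀ ℕ) : ↥β.support → ℕ := fun j => β j.1

/-- the canonical count of assignments of the parts of β to rows with row sums γ -/
noncomputable def Acnt (γ : ℕ →₀ ℤ) (β : ℕ →₀ ℕ) : ℕ :=
  wcnt ↥β.support (swt β) γ

lemma support_weights (β : ℕ →₀ ℕ) :
    (Finset.univ.val.map (swt β) : Multiset ℕ) = partsOf β := by
  rw [Finset.univ_eq_attach]
  show (β.support.1.attach.map (fun j => β j.1)) = _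
  rw [Multiset.attach_map_val' _ β]
  rfl

lemma xi_eq_Acnt (n : ℕ) (γ : ℕ →₀ ℤ) (β : ℕ →₀ ℕ) (g : Equiv.Perm (Fin n))
    (hg : HasCycleType g β) : xi n γ g = Acnt γ β := by
  rw [xi_eq_R γ g, R_eq_wcnt g γ]
  norm_cast
  apply wcnt_eq_of_multiset
  rw [blockT_weights g β hg, support_weights β]

end StepC

section StepD

variable (β : ℕ →₀ ℕ) (α : ℕ →₀ ℤ)

lemma swt_pos : ∀ x : ↥β.support, 1 ≤ swt β x := by
  rintro ⟨j, hj⟩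
  have := Finsupp.mem_support_iff.mp hj
  show 1 ≤ β j
  omega

/-- inner count: assignments for (α - εᵢ, β) sending part x to row i -/
noncomputable def Dcard (i : ℕ) (x : ↥β.support) : ℕ :=
  Nat.card {f : ↥β.support → ℕ //
    WCond (swt β) (α - Finsupp.single i 1) f ∧ f x = i}

lemma filter_card_eq_nat_card {St : Type*} [Fintype St] {P : (St → ℕ) → Prop}
    [Fintype {f : St → ℕ // P f}] (x : St) (i : ℕ) :
    (Finset.univ.filter (fun f : {f : St → ℕ // P f} => f.1 x = i)).card
      = Nat.card {f : St → ℕ // P f ∧ f x = i} := by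
  rw [← nat_card_subtype]
  exact Nat.card_congr (Equiv.subtypeSubtypeEquivSubtypeInter P (fun f => f x = i))

/-- per-row identity -/
lemma key_row (i : ℕ) :
    (α i - 1) * (Acnt (α - Finsupp.single i 1) β : ℤ)
      = ∑ x : ↥β.support, (β x.1 : ℤ) * (Dcard β α i x : ℤ) := by
  classical
  set γ' := α - Finsupp.single i 1 with hγ'
  have hγi : γ' i = α i - 1 := by
    rw [hγ', Finsupp.sub_apply, Finsupp.single_apply, if_pos rfl]
  have hfin : Finite {f : ↥β.support → ℕ // WCond (swt β) γ' f} :=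
    wcond_finite (swt β) (swt_pos β) γ'
  letI : Fintype {f : ↥β.support → ℕ // WCond (swt β) γ' f} := Fintype.ofFinite _
  have h1 : (Acnt γ' β : ℤ)
      = ((Finset.univ : Finset {f : ↥β.support → ℕ // WCond (swt β) γ' f}).card : ℤ) := by
    unfold Acnt wcnt
    rw [Nat.card_eq_fintype_card]
    rfl
  rw [h1, ← hγi, mul_comm, ← nsmul_eq_mul, ← Finset.sum_const]
  calc ∑ _f : {f : ↥β.support → ℕ // WCond (swt β) γ' f}, γ' i
      = ∑ f : {f : ↥β.support → ℕ // WCond (swt β) γ' f}, wSum (swt β) f.1 i := by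
        apply Finset.sum_congr rfl
        intro f _
        exact (f.2 i).symm
    _ = ∑ f : {f : ↥β.support → ℕ // WCond (swt β) γ' f}, ∑ x : ↥β.support,
          if f.1 x = i then (swt β x : ℤ) else 0 := rfl
    _ = ∑ x : ↥β.support, ∑ f : {f : ↥β.support → ℕ // WCond (swt β) γ' f},
          if f.1 x = i then (swt β x : ℤ) else 0 := Finset.sum_comm
    _ = ∑ x : ↥β.support, (β x.1 : ℤ) * (Dcard β α i x : ℤ) := by
        apply Finset.sum_congr rfl
        intro x _
        rw [← Finset.sum_filter, Finset.sum_const, filter_card_eq_nat_card x i,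
          nsmul_eq_mul, mul_comm]
        rfl

lemma acnt_zero_of_neg (i : ℕ) (hi : α i = 0) : Acnt (α - Finsupp.single i 1) β = 0 := by
  unfold Acnt wcnt
  rw [Nat.card_eq_zero]
  left
  constructor
  rintro ⟨f, hf⟩
  have h1 := hf i
  have h2 := wSum_nonneg (swt β) f i
  rw [h1] at h2
  rw [Finsupp.sub_apply, Finsupp.single_apply, if_pos rfl, hi] at h2
  omega

/-- support of β + εⱼ for j in the support -/
lemma support_add_single {j : ℕ} (hj : j ∈ β.support) :
    (β + Finsupp.single j 1).support = β.support := by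
  ext j'
  rw [Finsupp.mem_support_iff, Finsupp.mem_support_iff, Finsupp.add_apply,
    Finsupp.single_apply]
  have hone := Finsupp.mem_support_iff.mp hj
  by_cases h : j = j'
  · subst h
    rw [if_pos rfl]
    omega
  · rw [if_neg h]
    omega

/-- per-part identity -/
lemma key_part (x : ↥β.support) :
    (Acnt α (β + Finsupp.single x.1 1) : ℤ) = ∑ i ∈ α.support, (Dcard β α i x : ℤ) := by
  classical
  obtain ⟨j, hj⟩ := x
  set w' : ↥β.support → ℕ := fun y => β y.1 + if j = y.1 then 1 else 0 with hw'
  have hw'pos : ∀ y, 1 ≤ w' y := by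
    intro y
    exact le_trans (swt_pos β y) (Nat.le_add_right _ _)
  -- step 1: Acnt over the modified support equals wcnt with w'
  have h1 : Acnt α (β + Finsupp.single j 1) = wcnt ↥β.support w' α := by
    unfold Acnt
    apply wcnt_eq_of_equiv (swt (β + Finsupp.single j 1)) w'
      (Equiv.subtypeEquivRight (fun y => by rw [support_add_single β hj]))
    rintro ⟨y, hy⟩
    show β y + (if j = y then 1 else 0) = ((β + Finsupp.single j 1 : ℕ →₀ ℕ)) y
    rw [Finsupp.add_apply, Finsupp.single_apply]
  rw [h1]
  -- step 2: decompose by the value at ⟨j, hj⟩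
  have hfin : Finite {f : ↥β.support → ℕ // WCond w' α f} := wcond_finite w' hw'pos α
  letI : Fintype {f : ↥β.support → ℕ // WCond w' α f} := Fintype.ofFinite _
  have hval : ∀ f : {f : ↥β.support → ℕ // WCond w' α f}, f.1 ⟨j, hj⟩ ∈ α.support := by
    intro f
    rw [Finsupp.mem_support_iff, ← f.2 (f.1 ⟨j, hj⟩)]
    have hle := le_wSum w' f.1 ⟨j, hj⟩
    have hp : 1 ≤ w' ⟨j, hj⟩ := hw'pos _
    intro h0
    rw [h0] at hle
    omega
  have h2 : wcnt ↥β.support w' α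
      = ∑ i ∈ α.support, (Finset.univ.filter
          (fun f : {f : ↥β.support → ℕ // WCond w' α f} => f.1 ⟨j, hj⟩ = i)).card := by
    unfold wcnt
    rw [Nat.card_eq_fintype_card, ← Finset.card_univ]
    exact Finset.card_eq_sum_card_fiberwise (fun f _ => hval f)
  rw [h2]
  push_cast
  apply Finset.sum_congr rfl
  intro i _
  rw [filter_card_eq_nat_card]
  congr 1
  -- step 3: the conditional equivalence
  have hws : ∀ f : ↥β.support → ℕ, f ⟨j, hj⟩ = i → ∀ i',
      wSum w' f i' = wSum (swt β) f i' + (if i = i' then 1 else 0) := by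
    intro f hfj i'
    have hsingle : ∀ y : ↥β.support,
        (if f y = i' then (w' y : ℤ) else 0)
          = (if f y = i' then (swt β y : ℤ) else 0)
            + (if y = ⟨j, hj⟩ then (if f y = i' then 1 else 0) else 0) := by
      intro y
      by_cases hy : y = ⟨j, hj⟩
      · subst hy
        simp only [hw', if_pos rfl, swt]
        by_cases hfy : f ⟨j, hj⟩ = i' <;> simp [hfy]
      · have hne : j ≠ y.1 := fun hh => hy (Subtype.ext hh.symm)
        simp only [hw', if_neg hne, if_neg hy, swt]
        by_cases hfy : f y = i' <;> simp [hfy]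
    calc wSum w' f i' = ∑ y : ↥β.support, (if f y = i' then (w' y : ℤ) else 0) := rfl
      _ = ∑ y : ↥β.support, ((if f y = i' then (swt β y : ℤ) else 0)
            + (if y = ⟨j, hj⟩ then (if f y = i' then 1 else 0) else 0)) :=
          Finset.sum_congr rfl (fun y _ => hsingle y)
      _ = wSum (swt β) f i' + (if i = i' then 1 else 0) := by
          rw [Finset.sum_add_distrib]
          congr 1
          rw [Finset.sum_ite_eq' Finset.univ (⟨j, hj⟩ : ↥β.support)
            (fun y => if f y = i' then (1 : ℤ) else 0)]
          rw [if_pos (Finset.mem_univ _), hfj]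
  apply Nat.card_congr
  apply Equiv.subtypeEquivRight
  intro f
  constructor
  · rintro ⟨hcond, hfj⟩
    refine ⟨fun i' => ?_, hfj⟩
    have hc := hcond i'
    rw [hws f hfj i'] at hc
    rw [Finsupp.sub_apply, Finsupp.single_apply]
    by_cases hii : i = i'
    · rw [if_pos hii] at hc ⊢
      omega
    · rw [if_neg hii] at hc ⊢
      omega
  · rintro ⟨hcond, hfj⟩
    refine ⟨fun i' => ?_, hfj⟩
    have hc := hcond i'
    rw [Finsupp.sub_apply, Finsupp.single_apply] at hc
    rw [hws f hfj i']
    by_cases hii : i = i'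
    · rw [if_pos hii] at hc ⊢
      omega
    · rw [if_neg hii] at hc ⊢
      omega

end StepD

/-- Reciprocity for permutation characters:
`∑_{i=1}^l (α_i - 1) ξ^{α-ε_i}_β = ∑_{j=1}^m β_j ξ^α_{β+ε_j}`. -/
theorem stmt3 (l m N : ℕ) (α : ℕ →₀ ℤ) (hl : ∀ i, l ≤ i → α i = 0)
    (β : ℕ →₀ ℕ) (hm : ∀ j, m ≤ j → β j = 0) (hN : (β.sum fun _ v => v) = N)
    (τ : Equiv.Perm (Fin N)) (hτ : HasCycleType τ β)
    (c : ℕ → Equiv.Perm (Fin (N + 1)))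
    (hc : ∀ j < m, HasCycleType (c j) (β + Finsupp.single j 1)) :
    ∑ i ∈ Finset.range l, (α i - 1) * xi N (α - Finsupp.single i 1) τ
      = ∑ j ∈ Finset.range m, (β j : ℤ) * xi (N + 1) α (c j) := by
  classical
  have hsuppα : α.support ⊆ Finset.range l := by
    intro i hi
    rw [Finset.mem_range]
    by_contra h
    exact absurd (hl i (le_of_not_gt h)) (Finsupp.mem_support_iff.mp hi)
  have hsuppβ : β.support ⊆ Finset.range m := by
    intro j hj
    rw [Finset.mem_range]
    by_contra h
    exact absurd (hm j (le_of_not_gt h)) (Finsupp.mem_support_iff.mp hj)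
  calc ∑ i ∈ Finset.range l, (α i - 1) * xi N (α - Finsupp.single i 1) τ
      = ∑ i ∈ Finset.range l, (α i - 1) * (Acnt (α - Finsupp.single i 1) β : ℤ) := by
        apply Finset.sum_congr rfl
        intro i _
        rw [xi_eq_Acnt N (α - Finsupp.single i 1) β τ hτ]
    _ = ∑ i ∈ α.support, (α i - 1) * (Acnt (α - Finsupp.single i 1) β : ℤ) := by
        symm
        apply Finset.sum_subset hsuppα
        intro i _ hi
        rw [acnt_zero_of_neg β α i (Finsupp.notMem_support_iff.mp hi)]
        ring
    _ = ∑ i ∈ α.support, ∑ x : ↥β.support, (β x.1 : ℤ) * (Dcard β α i x : ℤ) :=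
        Finset.sum_congr rfl (fun i _ => key_row β α i)
    _ = ∑ x : ↥β.support, ∑ i ∈ α.support, (β x.1 : ℤ) * (Dcard β α i x : ℤ) :=
        Finset.sum_comm
    _ = ∑ x : ↥β.support, (β x.1 : ℤ) * ∑ i ∈ α.support, (Dcard β α i x : ℤ) :=
        Finset.sum_congr rfl (fun x _ => (Finset.mul_sum _ _ _).symm)
    _ = ∑ x : ↥β.support, (β x.1 : ℤ) * (Acnt α (β + Finsupp.single x.1 1) : ℤ) :=
        Finset.sum_congr rfl (fun x _ => by rw [key_part β α x])
    _ = ∑ x : ↥β.support, (β x.1 : ℤ) * xi (N + 1) α (c x.1) := by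
        apply Finset.sum_congr rfl
        intro x _
        rw [xi_eq_Acnt (N + 1) α (β + Finsupp.single x.1 1) (c x.1)
          (hc x.1 (Finset.mem_range.mp (hsuppβ x.2)))]
    _ = ∑ j ∈ β.support, (β j : ℤ) * xi (N + 1) α (c j) :=
        Finset.sum_coe_sort β.support (fun j => (β j : ℤ) * xi (N + 1) α (c j))
    _ = ∑ j ∈ Finset.range m, (β j : ℤ) * xi (N + 1) α (c j) := by
        apply Finset.sum_subset hsuppβ
        intro j _ hj
        rw [Finsupp.notMem_support_iff.mp hj]
        simp
end

section
/- Let n ≥ 1, β a partition of n − 1 realized as σ_β = ∏_j σ_j (disjoint cycles of lengths β_j on consecutive blocks of {1,…,n−1}), α a composition of n, i a positive index, j a positive index with β_j > 0 or j-th cycle empty, and X ⊆ {1,…,n−1}. Let σ[j] ∈ S_n be obtained from σ_β by inserting n into the j-th cycle. Then the number of α-tabloids t fixed by σ[j] with t_i = X ∪ {n} equals the number of (α − ε_i)-tabloids t fixed by σ_β with t_i = X if supp(σ_j) ⊆ X, and equals 0 otherwise. -/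
open Finsupp
open scoped Classical

/-!
Write `σ[j] = σ̃ * (p n)`, where `σ̃` is `σ` extended by the fixed point `n` and `p` is the point
of the `j`-th cycle after which `n` is inserted (or `n` itself if that cycle is empty).
A `σ[j]`-stable row containing `n` also contains `σ[j] n = σ p`, and it is then closed under `σ`
along the `j`-th cycle, so it contains `supp σ_j`; hence there is no such tabloid unless
`supp σ_j ⊆ X`. If `supp σ_j ⊆ X`, then `p` and `n` lie in row `i` together, the transposition
`(p n)` fixes every row, and deleting `n` from row `i` is a bijection onto the
`(α - ε_i)`-tabloids fixed by `σ`.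
-/

open Equiv Finset Function

lemma Finset.image_swap_eq_self {α : Type*} [DecidableEq α] {u : Finset α} {a b : α}
    (h : a ∈ u ↔ b ∈ u) : u.image (swap a b) = u := by
  ext z
  rw [← coe_toEmbedding, ← map_eq_image, mem_map_equiv, symm_swap, swap_apply_def]
  split_ifs with hza hzb
  · rw [hza, h]
  · rw [hzb, h]
  · rfl

lemma Finset.image_mul_swap_eq {α : Type*} [DecidableEq α] (g : Perm α) {u : Finset α} {a b : α}
    (h : a ∈ u ↔ b ∈ u) : u.image (g * swap a b) = u.image g := by
  rw [Perm.coe_mul, ← image_image, image_swap_eq_self h]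

lemma Finset.noncommProd_perm_apply_of_forall_ne {ι α : Type*} [DecidableEq ι] {s : Finset ι}
    {f : ι → Perm α} (comm : (s : Set ι).Pairwise fun a b => Commute (f a) (f b)) {j : ι}
    (hj : j ∈ s) {y : α} (hy : ∀ k ∈ s, k ≠ j → f k (f j y) = f j y) :
    s.noncommProd f comm y = f j y := by
  rw [← s.noncommProd_erase_mul hj f comm, Perm.mul_apply]
  exact noncommProd_induction _ _ _ (fun g : Perm α => g (f j y) = f j y)
    (fun a b ha hb => by rw [Perm.mul_apply, hb, ha]) rfl
    (fun k hk => hy k (mem_of_mem_erase hk) (ne_of_mem_erase hk))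

lemma Equiv.Perm.IsCycleOn.subset_of_mapsTo {α : Type*} [Finite α] {f : Perm α} {s t : Set α}
    (hf : f.IsCycleOn s) {a : α} (ha : a ∈ s ∩ t) (hst : Set.MapsTo f (s ∩ t) t) : s ⊆ t := by
  have hinv : Set.MapsTo f (s ∩ t) (s ∩ t) := fun y hy => ⟨hf.1.mapsTo hy.1, hst hy⟩
  intro y hy
  obtain ⟨n, -, rfl⟩ := (hf.2 ha.1 hy).exists_pow_eq'
  rw [Perm.coe_pow]
  exact (hinv.iterate n ha).2

section Fin

variable {N : ℕ}

@[simp]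
lemma viaFintypeEmbedding_castSuccEmb_castSucc (σ : Perm (Fin N)) (x : Fin N) :
    σ.viaFintypeEmbedding Fin.castSuccEmb x.castSucc = (σ x).castSucc :=
  σ.viaFintypeEmbedding_apply_image Fin.castSuccEmb x

@[simp]
lemma viaFintypeEmbedding_castSuccEmb_last (σ : Perm (Fin N)) :
    σ.viaFintypeEmbedding Fin.castSuccEmb (Fin.last N) = Fin.last N :=
  σ.viaFintypeEmbedding_apply_notMem_range _ (by simp [Fin.range_castSucc])

lemma castSucc_apply_mem_of_image_mul_swap_eq (σ : Perm (Fin N)) (p : Fin (N + 1))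
    {u : Finset (Fin (N + 1))}
    (hu : u.image (σ.viaFintypeEmbedding Fin.castSuccEmb * swap p (Fin.last N)) = u)
    {y : Fin N} (hy : y.castSucc ∈ u) : (σ y).castSucc ∈ u := by
  have hmaps := image_subset_iff.mp hu.le
  by_cases hyp : y.castSucc = p
  · subst hyp
    simpa using hmaps _ (hmaps _ hy)
  · simpa [swap_apply_of_ne_of_ne hyp (Fin.castSucc_ne_last y)] using hmaps _ hy

lemma subset_of_image_mul_swap_eq {σ f : Perm (Fin N)} {s : Set (Fin N)} (hf : f.IsCycleOn s)
    (hσf : ∀ y ∈ s, σ y = f y) {q : Fin N} (hq : q ∈ s) {u : Finset (Fin (N + 1))}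
    (hu : u.image (σ.viaFintypeEmbedding Fin.castSuccEmb * swap q.castSucc (Fin.last N)) = u)
    (hlast : Fin.last N ∈ u) : s ⊆ {y | y.castSucc ∈ u} := by
  refine hf.subset_of_mapsTo ⟨hf.1.mapsTo hq, ?_⟩ fun y ⟨hys, hyu⟩ => ?_
  · rw [Set.mem_ofPred_eq, ← hσf q hq]
    simpa using image_subset_iff.mp hu.le _ hlast
  · rw [Set.mem_ofPred_eq, ← hσf y hys]
    exact castSucc_apply_mem_of_image_mul_swap_eq σ _ hu hyu

def liftTabloid (i : ℕ) (t : ℕ → Finset (Fin N)) (k : ℕ) : Finset (Fin (N + 1)) :=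
  if k = i then insert (Fin.last N) ((t k).image Fin.castSucc) else (t k).image Fin.castSucc

variable {i : ℕ} {t s : ℕ → Finset (Fin N)} {k : ℕ}

lemma liftTabloid_self : liftTabloid i t i = insert (Fin.last N) ((t i).image Fin.castSucc) :=
  if_pos rfl

@[simp]
lemma castSucc_mem_liftTabloid {x : Fin N} : x.castSucc ∈ liftTabloid i t k ↔ x ∈ t k := by
  unfold liftTabloid
  split_ifs <;> simp [Fin.castSucc_ne_last]

@[simp]
lemma last_mem_liftTabloid : Fin.last N ∈ liftTabloid i t k ↔ k = i := by
  unfold liftTabloid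
  split_ifs with h <;> simp [h]

lemma liftTabloid_eq_liftTabloid_iff : liftTabloid i s k = liftTabloid i t k ↔ s k = t k := by
  refine ⟨fun h => ?_, fun h => by simp only [liftTabloid, h]⟩
  ext x
  simpa using congrArg (x.castSucc ∈ ·) h

lemma liftTabloid_injective : Injective (liftTabloid (N := N) i) :=
  fun _ _ h => funext fun _ => liftTabloid_eq_liftTabloid_iff.1 (congrFun h _)

lemma card_liftTabloid : (liftTabloid i t k).card = (t k).card + if k = i then 1 else 0 := by
  unfold liftTabloid
  split_ifs
  · rw [card_insert_of_notMem (by simp), card_image_of_injective _ (Fin.castSucc_injective N)]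
  · rw [card_image_of_injective _ (Fin.castSucc_injective N), add_zero]

lemma disjoint_liftTabloid_iff {l : ℕ} (hkl : k ≠ l) :
    Disjoint (liftTabloid i t k) (liftTabloid i t l) ↔ Disjoint (t k) (t l) := by
  simp only [disjoint_left, Fin.forall_fin_succ', castSucc_mem_liftTabloid, last_mem_liftTabloid]
  exact and_iff_left fun hk hl => hkl (hk.trans hl.symm)

lemma isTabloid_liftTabloid_iff {α : ℕ →₀ ℤ} :
    IsTabloid (N + 1) α (liftTabloid i t) ↔ IsTabloid N (α - single i 1) t := by
  refine and_congr (forall₂_congr fun k l => imp_congr_right fun hkl =>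
    disjoint_liftTabloid_iff hkl) (forall_congr' fun k => ?_)
  rw [card_liftTabloid, Finsupp.sub_apply, single_apply]
  split_ifs <;> omega

lemma eq_liftTabloid {u : ℕ → Finset (Fin (N + 1))}
    (hdisj : ∀ k l, k ≠ l → Disjoint (u k) (u l)) (hlast : Fin.last N ∈ u i) :
    u = liftTabloid i fun k => univ.filter fun x => x.castSucc ∈ u k := by
  funext k
  ext z
  induction z using Fin.lastCases with
  | last =>
    rw [last_mem_liftTabloid]
    exact ⟨fun hk => by_contra fun hki => disjoint_left.mp (hdisj k i hki) hk hlast,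
      fun hki => hki ▸ hlast⟩
  | cast x => simp

lemma liftTabloid_image_mul_swap_eq_iff (σ : Perm (Fin N)) {p : Fin (N + 1)}
    (hp : ∀ l, p ∈ liftTabloid i t l ↔ l = i) :
    (liftTabloid i t k).image (σ.viaFintypeEmbedding Fin.castSuccEmb * swap p (Fin.last N)) =
        liftTabloid i t k ↔ (t k).image σ = t k := by
  rw [image_mul_swap_eq _ (by rw [hp, last_mem_liftTabloid])]
  convert liftTabloid_eq_liftTabloid_iff (s := fun k => (t k).image σ) using 2
  unfold liftTabloid
  split_ifs <;> simp [image_insert, image_image, comp_def]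

theorem card_tabloids_fixed_by_mul_swap (σ : Perm (Fin N)) (α : ℕ →₀ ℤ) (i : ℕ)
    (X : Finset (Fin N)) {p : Fin (N + 1)} (hp : p ∈ insert (Fin.last N) (X.image Fin.castSucc)) :
    Nat.card {t : ℕ → Finset (Fin (N + 1)) //
        IsTabloid (N + 1) α t ∧
        (∀ k, (t k).image (σ.viaFintypeEmbedding Fin.castSuccEmb * swap p (Fin.last N)) = t k) ∧
        t i = insert (Fin.last N) (X.image Fin.castSucc)} =
      Nat.card {t : ℕ → Finset (Fin N) //
        IsTabloid N (α - Finsupp.single i 1) t ∧ (∀ k, (t k).image σ = t k) ∧ t i = X} := by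
  have hrow : ∀ t : ℕ → Finset (Fin N),
      liftTabloid i t i = insert (Fin.last N) (X.image Fin.castSucc) ↔ t i = X := fun t => by
    rw [← liftTabloid_eq_liftTabloid_iff (s := t) (t := fun _ => X) (i := i) (k := i),
      liftTabloid_self (t := fun _ => X)]
  have hfixed : ∀ t : ℕ → Finset (Fin N), IsTabloid N (α - single i 1) t → t i = X → ∀ k,
      (liftTabloid i t k).image (σ.viaFintypeEmbedding Fin.castSuccEmb * swap p (Fin.last N)) =
        liftTabloid i t k ↔ (t k).image σ = t k := by
    intro t ht hti k
    have hpi : p ∈ liftTabloid i t i := by rwa [liftTabloid_self, hti]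
    refine liftTabloid_image_mul_swap_eq_iff σ fun l => ⟨fun hpl => by_contra fun hli => ?_, ?_⟩
    · exact disjoint_left.mp ((disjoint_liftTabloid_iff hli).2 (ht.1 l i hli)) hpl hpi
    · rintro rfl
      exact hpi
  suffices h : {t | IsTabloid (N + 1) α t ∧
        (∀ k, (t k).image (σ.viaFintypeEmbedding Fin.castSuccEmb * swap p (Fin.last N)) = t k) ∧
        t i = insert (Fin.last N) (X.image Fin.castSucc)} =
      liftTabloid i '' {t | IsTabloid N (α - single i 1) t ∧ (∀ k, (t k).image σ = t k) ∧ t i = X}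
    from (congrArg (fun s : Set _ => Nat.card s) h).trans
      (Nat.card_image_of_injective liftTabloid_injective _)
  ext t
  constructor
  · rintro ⟨ht, htfix, hti⟩
    have hlift := eq_liftTabloid ht.1 (hti ▸ mem_insert_self _ _)
    rw [hlift, isTabloid_liftTabloid_iff] at ht
    rw [hlift, hrow] at hti
    rw [hlift] at htfix
    exact ⟨_, ⟨ht, fun k => (hfixed _ ht hti k).1 (htfix k), hti⟩, hlift.symm⟩
  · rintro ⟨t, ⟨ht, htfix, hti⟩, rfl⟩
    exact ⟨isTabloid_liftTabloid_iff.2 ht, fun k => (hfixed t ht hti k).2 (htfix k),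
      (hrow t).2 hti⟩

end Fin

theorem stmt12_general (N : ℕ) (α : ℕ →₀ ℤ) (β : ℕ →₀ ℕ)
    (f : ℕ → Equiv.Perm (Fin N)) (S : ℕ → Finset (Fin N))
    (hcomm : (β.support : Set ℕ).Pairwise fun a b => Commute (f a) (f b))
    (σ : Equiv.Perm (Fin N)) (hσ : σ = β.support.noncommProd f hcomm)
    (hcard : ∀ j, (S j).card = β j)
    (hcyc : ∀ j, (f j).IsCycleOn (S j : Set (Fin N)))
    (hfix : ∀ j x, x ∉ S j → f j x = x)
    (hdisj : ∀ j k, j ≠ k → Disjoint (S j) (S k))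
    (i j : ℕ) (X : Finset (Fin N)) (p : Fin (N + 1))
    (hp : (∃ q ∈ S j, p = Fin.castSucc q) ∨ (S j = ∅ ∧ p = Fin.last N)) :
    Nat.card {t : ℕ → Finset (Fin (N + 1)) //
        IsTabloid (N + 1) α t ∧
        (∀ k, (t k).image (σ.viaFintypeEmbedding Fin.castSuccEmb * Equiv.swap p (Fin.last N))
          = t k) ∧
        t i = insert (Fin.last N) (X.image Fin.castSucc)} =
      if S j ⊆ X then
        Nat.card {t : ℕ → Finset (Fin N) //
          IsTabloid N (α - Finsupp.single i 1) t ∧ (∀ k, (t k).image σ = t k) ∧ t i = X}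
      else 0 := by
  have hsubset : ∀ t : ℕ → Finset (Fin (N + 1)),
      (∀ k, (t k).image (σ.viaFintypeEmbedding Fin.castSuccEmb * swap p (Fin.last N)) = t k) →
      t i = insert (Fin.last N) (X.image Fin.castSucc) → S j ⊆ X := by
    intro t ht hti
    rcases hp with ⟨q, hq, rfl⟩ | ⟨hS, -⟩
    · have hj : j ∈ β.support := by
        rw [Finsupp.mem_support_iff, ← hcard]
        exact (card_pos.2 ⟨q, hq⟩).ne'
      have hσf : ∀ y ∈ S j, σ y = f j y := fun y hy =>
        hσ ▸ noncommProd_perm_apply_of_forall_ne hcomm hj fun k _ hkj =>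
          hfix k _ (disjoint_left.mp (hdisj j k hkj.symm) ((hcyc j).1.mapsTo hy))
      intro y hy
      simpa [hti] using subset_of_image_mul_swap_eq (hcyc j) hσf hq (ht i)
        (hti ▸ mem_insert_self _ _) hy
    · simp [hS]
  split_ifs with hX
  · refine card_tabloids_fixed_by_mul_swap σ α i X ?_
    rcases hp with ⟨q, hq, rfl⟩ | ⟨-, rfl⟩
    · simp [hX hq]
    · exact mem_insert_self _ _
  · exact Nat.card_eq_zero.2 (.inl ⟨fun ⟨t, _, ht, hti⟩ => hX (hsubset t ht hti)⟩)

/-- Step 2: the number of `α`-tabloids fixed by `σ[j]` (obtained from `σ` by inserting the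
extra point `n` into the `j`-th cycle) whose `i`-th row is `X ∪ {n}` equals the number of
`(α-ε_i)`-tabloids fixed by `σ` whose `i`-th row is `X` when `supp σ_j ⊆ X`, and is `0`
otherwise. -/
theorem stmt12 (N : ℕ) (α : ℕ →₀ ℤ) (hαpos : ∀ i, 0 ≤ α i)
    (hαsum : (α.sum fun _ v => v) = ((N + 1 : ℕ) : ℤ))
    (β : ℕ →₀ ℕ) (hβpart : ∀ j, β (j + 1) ≤ β j) (hβsum : (β.sum fun _ v => v) = N)
    (f : ℕ → Equiv.Perm (Fin N)) (S : ℕ → Finset (Fin N))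
    (hcomm : (β.support : Set ℕ).Pairwise fun a b => Commute (f a) (f b))
    (σ : Equiv.Perm (Fin N)) (hσ : σ = β.support.noncommProd f hcomm)
    (hcard : ∀ j, (S j).card = β j)
    (hcyc : ∀ j, (f j).IsCycleOn (S j : Set (Fin N)))
    (hfix : ∀ j x, x ∉ S j → f j x = x)
    (hdisj : ∀ j k, j ≠ k → Disjoint (S j) (S k))
    (i j : ℕ) (X : Finset (Fin N)) (p : Fin (N + 1))
    (hp : (∃ q ∈ S j, p = Fin.castSucc q) ∨ (S j = ∅ ∧ p = Fin.last N)) :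
    Nat.card {t : ℕ → Finset (Fin (N + 1)) //
        IsTabloid (N + 1) α t ∧
        (∀ k, (t k).image (σ.viaFintypeEmbedding Fin.castSuccEmb * Equiv.swap p (Fin.last N))
          = t k) ∧
        t i = insert (Fin.last N) (X.image Fin.castSucc)} =
      if S j ⊆ X then
        Nat.card {t : ℕ → Finset (Fin N) //
          IsTabloid N (α - Finsupp.single i 1) t ∧ (∀ k, (t k).image σ = t k) ∧ t i = X}
      else 0 :=
  stmt12_general N α β f S hcomm σ hσ hcard hcyc hfix hdisj i j X p hp
end
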